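/- arXiv:2004.03197 — 4 statements merged into one kernel-verified Lean document; each statement's English description precedes it below -/
import Mathlib

section
/- Let y = (0, 1, 1/2, 1/4, ..., 1/2^{n-2}, ...) and x = (1, 1/2, 1/4, ..., 1/2^{n-1}, ...) be sequences in ℓ¹. Then there is no infinite matrix (a_{ij}) with nonnegative entries satisfying ∑_i a_{ij} = 1 for every j and ∑_j a_{ij} ≤ 1 for every i, such that ∑_j a_{ij} y_j = x_i for all i. -/
/-- The sequence `y = (0, 1, 1/2, 1/4, ...)` (1-indexed in the paper; here 0-indexed:
`y 0 = 0`, `y n = (1/2)^(n-1)` for `n ≥ 1`). -/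
noncomputable def ySeq : ℕ → ℝ := fun n => if n = 0 then 0 else (1 / 2 : ℝ) ^ (n - 1)

/-- The sequence `x = (1, 1/2, 1/4, ...)`: `x n = (1/2)^n`. -/
noncomputable def xSeq : ℕ → ℝ := fun n => (1 / 2 : ℝ) ^ n

/-- There is no infinite matrix with nonnegative entries, column sums `= 1` and row
sums `≤ 1`, mapping `y` to `x`. -/
theorem stmt0 :
    ¬ ∃ a : ℕ → ℕ → ℝ,
      (∀ i j, 0 ≤ a i j) ∧
      (∀ j, HasSum (fun i => a i j) 1) ∧
      (∀ i, Summable (fun j => a i j)) ∧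
      (∀ i, ∑' j, a i j ≤ 1) ∧
      (∀ i, HasSum (fun j => a i j * ySeq j) (xSeq i)) := by
  rintro ⟨a, hpos, hcol, hrowSummable, hrowLe, hmap⟩
  have hx_pos : ∀ i : ℕ, (0 : ℝ) < xSeq i := fun i => by unfold xSeq; positivity
  -- Main claim: each row i is the indicator of column i+1.
  have key : ∀ i : ℕ, (∀ j, j ≠ i + 1 → a i j = 0) ∧ a i (i + 1) = 1 := by
    intro i
    induction i using Nat.strong_induction_on with
    | _ i IH =>
      -- entries a i j vanish for 1 ≤ j ≤ i, since column j is exhausted by row j-1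
      have hzero : ∀ j, 1 ≤ j → j ≤ i → a i j = 0 := by
        intro j h1 h2
        obtain ⟨k, rfl⟩ : ∃ k, j = k + 1 := ⟨j - 1, by omega⟩
        have hk : k < i := by omega
        have hak : a k (k + 1) = 1 := (IH k hk).2
        have hc := hcol (k + 1)
        have hsum2 : a i (k+1) + a k (k+1) ≤ 1 := by
          have := Summable.sum_le_tsum ({i, k} : Finset ℕ)
            (fun m _ => hpos m (k+1)) hc.summable
          rw [hc.tsum_eq] at this
          rwa [Finset.sum_pair (by omega : i ≠ k)] at this
        have := hpos i (k+1)
        linarith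
      -- pointwise bound: a i j * y j ≤ x i * a i j
      have hle : ∀ j, a i j * ySeq j ≤ xSeq i * a i j := by
        intro j
        rcases Nat.eq_zero_or_pos j with rfl | hj
        · simp [ySeq]
          exact mul_nonneg (hx_pos i).le (hpos i 0)
        rcases le_or_gt j i with hji | hji
        · rw [hzero j hj hji]; simp
        · have hy : ySeq j ≤ xSeq i := by
            simp only [ySeq, xSeq, if_neg (by omega : j ≠ 0)]
            exact pow_le_pow_of_le_one (by norm_num) (by norm_num) (by omega)
          calc a i j * ySeq j ≤ a i j * xSeq i :=
                mul_le_mul_of_nonneg_left hy (hpos i j)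
            _ = xSeq i * a i j := mul_comm _ _
      have hb := hmap i
      have hg : Summable (fun j => xSeq i * a i j) := (hrowSummable i).mul_left _
      have htg_le : ∑' j, xSeq i * a i j ≤ xSeq i := by
        rw [tsum_mul_left]
        calc xSeq i * ∑' j, a i j ≤ xSeq i * 1 :=
              mul_le_mul_of_nonneg_left (hrowLe i) (hx_pos i).le
          _ = xSeq i := mul_one _
      have htb : ∑' j, a i j * ySeq j = xSeq i := hb.tsum_eq
      have htb_le : ∑' j, a i j * ySeq j ≤ ∑' j, xSeq i * a i j :=
        Summable.tsum_le_tsum hle hb.summable hg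
      have htg : ∑' j, xSeq i * a i j = xSeq i := le_antisymm htg_le (htb ▸ htb_le)
      -- pointwise equality
      have heq : ∀ j, a i j * ySeq j = xSeq i * a i j := by
        intro j
        have hd : Summable (fun j => xSeq i * a i j - a i j * ySeq j) :=
          hg.sub hb.summable
        have htd : ∑' j, (xSeq i * a i j - a i j * ySeq j) = 0 := by
          rw [Summable.tsum_sub hg hb.summable, htg, htb, sub_self]
        have hdle := Summable.le_tsum hd j (fun m _ => sub_nonneg.2 (hle m))
        have := sub_nonneg.2 (hle j)
        rw [htd] at hdle
        linarith
      -- all off-(i+1) entries vanish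
      have hvan : ∀ j, j ≠ i + 1 → a i j = 0 := by
        intro j hj
        rcases Nat.eq_zero_or_pos j with rfl | hj1
        · have h0 := heq 0
          simp [ySeq] at h0
          rcases h0 with h | h
          · exact absurd h (ne_of_gt (hx_pos i))
          · exact h
        rcases le_or_gt j i with hji | hji
        · exact hzero j hj1 hji
        · -- j ≥ i + 2
          have hji2 : i + 2 ≤ j := by omega
          have h0 := heq j
          simp only [ySeq, xSeq, if_neg (by omega : j ≠ 0)] at h0
          have hlt : ((1:ℝ)/2) ^ (j - 1) < ((1:ℝ)/2) ^ i := by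
            apply pow_lt_pow_right_of_lt_one₀ (by norm_num) (by norm_num)
            omega
          have hnn := hpos i j
          nlinarith
      refine ⟨hvan, ?_⟩
      have hts : ∑' j, a i j * ySeq j = a i (i+1) * ySeq (i+1) :=
        tsum_eq_single (i+1) (fun j hj => by rw [hvan j hj, zero_mul])
      rw [htb] at hts
      have hy1 : ySeq (i+1) = xSeq i := by
        simp [ySeq, xSeq]
      rw [hy1] at hts
      have := hx_pos i
      field_simp at hts
      linarith
  -- column 0 sums to 1, but all its entries vanish
  have h0 : (fun m => a m 0) = (fun _ => (0:ℝ)) := by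
    funext m
    exact (key m).1 0 (by omega)
  have := hcol 0
  rw [h0] at this
  have h01 : (0:ℝ) = 1 := hasSum_zero.unique this
  norm_num at h01
end

section
/- Let x, y ∈ L¹(0,∞) be real-valued with ∫x = ∫y. Then x is majorized by y (i.e., x₊ is submajorized by y₊ and x₋ is submajorized by y₋) if and only if for every t ∈ ℝ, ∫(x - t)₊ dm ≤ ∫(y - t)₊ dm and ∫(-x - t)₊ dm ≤ ∫(-y - t)₊ dm. -/
/-!
Write `μ f` for the decreasing rearrangement, `Φ f u = ∫₀ᵘ μ f` and `Ψ f t = ∫ (μ f - t)₊`; by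
equimeasurability `Ψ f t = ∫ (|f| - t)₊` for `t ≥ 0`. The two are Legendre dual: from
`μ f ≤ (μ f - t)₊ + t` we get `Φ f u ≤ Ψ f t + t u` for all `t`, with equality at `t = μ f u`
and also at `u = m{|f| > t}`. Hence `Φ f ≤ Φ g` iff `Ψ f ≤ Ψ g`. Apply this to `x₊` and `x₋`,
using `(x - t)₊ = (x₊ - t)₊` for `t ≥ 0`; for `t < 0` neither `(x - t)₊` nor `(y - t)₊` is
integrable on `(0,∞)`, so both integrals are `0`.
-/

open MeasureTheory Set

/-- Decreasing rearrangement of `|f|` with respect to Lebesgue measure on `(0,∞)`. -/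
noncomputable def rearr (f : ℝ → ℝ) (t : ℝ) : ℝ :=
  sInf {s : ℝ | 0 ≤ s ∧ (volume.restrict (Set.Ioi (0:ℝ))) {x | s < |f x|} ≤ ENNReal.ofReal t}

/-- Positive part of a function. -/
noncomputable def posPart' (f : ℝ → ℝ) : ℝ → ℝ := fun t => max (f t) 0

/-- Negative part of a function. -/
noncomputable def negPart' (f : ℝ → ℝ) : ℝ → ℝ := fun t => max (-f t) 0

/-- Hardy–Littlewood–Pólya submajorization on `(0,∞)`. -/
def SubMaj (f g : ℝ → ℝ) : Prop :=
  ∀ t : ℝ, 0 ≤ t →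
    (∫ s in Set.Ioc (0:ℝ) t, rearr f s) ≤ ∫ s in Set.Ioc (0:ℝ) t, rearr g s

/-- Hardy–Littlewood–Pólya majorization on `(0,∞)`:
`f₊ ≺≺ g₊`, `f₋ ≺≺ g₋` and `∫ f = ∫ g`. -/
def Maj (f g : ℝ → ℝ) : Prop :=
  SubMaj (posPart' f) (posPart' g) ∧ SubMaj (negPart' f) (negPart' g) ∧
    (∫ t in Set.Ioi (0:ℝ), f t) = ∫ t in Set.Ioi (0:ℝ), g t

open scoped ENNReal

noncomputable def distribution (f : ℝ → ℝ) (s : ℝ) : ℝ≥0∞ :=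
  volume.restrict (Ioi 0) {x | s < |f x|}

section Rearrangement

variable {f : ℝ → ℝ}

lemma distribution_antitone (f : ℝ → ℝ) : Antitone (distribution f) :=
  fun _ _ h => measure_mono fun _ hx => lt_of_le_of_lt h hx

lemma distribution_eq_iSup (f : ℝ → ℝ) (s : ℝ) :
    distribution f s = ⨆ n : ℕ, distribution f (s + 1 / (n + 1)) := by
  have hmono : Monotone fun n : ℕ => {x | s + 1 / ((n : ℝ) + 1) < |f x|} := by
    intro m n hmn x hx
    simp only [mem_ofPred_eq] at hx ⊢
    have : (1 : ℝ) / (n + 1) ≤ 1 / (m + 1) := by gcongr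
    linarith
  have hunion : {x | s < |f x|} = ⋃ n : ℕ, {x | s + 1 / ((n : ℝ) + 1) < |f x|} := by
    ext x
    simp only [mem_ofPred_eq, mem_iUnion]
    constructor
    · intro hx
      obtain ⟨n, hn⟩ := exists_nat_one_div_lt (sub_pos.2 hx)
      exact ⟨n, by linarith⟩
    · rintro ⟨n, hn⟩
      have : (0 : ℝ) < 1 / (n + 1) := by positivity
      linarith
  rw [distribution, hunion]
  exact hmono.measure_iUnion

lemma ofReal_mul_distribution_le (hf : IntegrableOn f (Ioi 0)) (s : ℝ) :
    ENNReal.ofReal s * distribution f s ≤ ∫⁻ x in Ioi 0, ‖f x‖ₑ := by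
  refine le_trans ?_ (mul_meas_ge_le_lintegral₀ hf.aemeasurable.enorm (ENNReal.ofReal s))
  refine mul_le_mul_right (measure_mono fun x (hx : s < |f x|) => ?_) _
  rw [mem_ofPred_eq, Real.enorm_eq_ofReal_abs]
  exact ENNReal.ofReal_le_ofReal hx.le

lemma distribution_lt_top (hf : IntegrableOn f (Ioi 0)) {s : ℝ} (hs : 0 < s) :
    distribution f s < ∞ := by
  have h := (ofReal_mul_distribution_le hf s).trans_lt hf.2
  exact ENNReal.lt_top_of_mul_ne_top_right h.ne (by simp [hs])

lemma exists_distribution_le (hf : IntegrableOn f (Ioi 0)) {r : ℝ} (hr : 0 < r) :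
    ∃ s, 0 ≤ s ∧ distribution f s ≤ ENNReal.ofReal r := by
  set I := ∫⁻ x in Ioi 0, ‖f x‖ₑ
  have hI : I ≠ ∞ := hf.2.ne
  refine ⟨(I.toReal + 1) / r, by positivity, ?_⟩
  by_contra! hlt
  have hsr : (I.toReal + 1) / r * r = I.toReal + 1 := by field_simp
  have : ENNReal.ofReal ((I.toReal + 1) / r * r) ≤ I := by
    rw [ENNReal.ofReal_mul (by positivity)]
    exact (mul_le_mul_right hlt.le _).trans (ofReal_mul_distribution_le hf _)
  rw [hsr, ENNReal.ofReal_le_iff_le_toReal hI] at this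
  linarith

lemma rearr_nonneg (f : ℝ → ℝ) (r : ℝ) : 0 ≤ rearr f r :=
  Real.sInf_nonneg fun _ hs => hs.1

lemma lt_rearr_iff (hf : IntegrableOn f (Ioi 0)) {r s : ℝ} (hr : 0 < r) (hs : 0 ≤ s) :
    s < rearr f r ↔ ENNReal.ofReal r < distribution f s := by
  have hbdd : BddBelow {s | 0 ≤ s ∧ distribution f s ≤ ENNReal.ofReal r} := ⟨0, fun _ h => h.1⟩
  constructor
  · intro h
    by_contra! hle
    exact (csInf_le hbdd ⟨hs, hle⟩).not_gt h
  · intro h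
    rw [distribution_eq_iSup] at h
    obtain ⟨n, hn⟩ := lt_iSup_iff.1 h
    have hlt : s < s + 1 / (n + 1) := lt_add_of_pos_right s (by positivity)
    refine hlt.trans_le (le_csInf (exists_distribution_le hf hr) fun σ hσ => ?_)
    by_contra! hσlt
    exact (hn.trans_le ((distribution_antitone f hσlt.le).trans hσ.2)).false

lemma rearr_antitoneOn (hf : IntegrableOn f (Ioi 0)) : AntitoneOn (rearr f) (Ioi 0) := by
  intro r hr r' _ hrr'
  obtain ⟨s, hs⟩ := exists_distribution_le hf hr
  exact csInf_le_csInf ⟨0, fun _ h => h.1⟩ ⟨s, hs⟩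
    fun s hs => ⟨hs.1, hs.2.trans (ENNReal.ofReal_le_ofReal hrr')⟩

lemma aemeasurable_rearr (hf : IntegrableOn f (Ioi 0)) :
    AEMeasurable (rearr f) (volume.restrict (Ioi 0)) :=
  aemeasurable_restrict_of_antitoneOn measurableSet_Ioi (rearr_antitoneOn hf)

lemma volume_lt_rearr_eq_distribution (hf : IntegrableOn f (Ioi 0)) {s : ℝ} (hs : 0 ≤ s) :
    volume.restrict (Ioi 0) {r | s < rearr f r} = distribution f s := by
  rw [Measure.restrict_apply' measurableSet_Ioi]
  by_cases htop : distribution f s = ∞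
  · have : {r | s < rearr f r} ∩ Ioi 0 = Ioi 0 :=
      inter_eq_right.2 fun r hr => (lt_rearr_iff hf hr hs).2 (htop ▸ ENNReal.ofReal_lt_top)
    rw [this, htop, Real.volume_Ioi]
  · have : {r | s < rearr f r} ∩ Ioi 0 = Ioo 0 (distribution f s).toReal := by
      ext r
      simp only [mem_inter_iff, mem_ofPred_eq, mem_Ioi, mem_Ioo]
      refine ⟨fun ⟨h, hr⟩ => ⟨hr, ?_⟩, fun ⟨hr, h⟩ => ⟨?_, hr⟩⟩
      · rwa [lt_rearr_iff hf hr hs, ENNReal.ofReal_lt_iff_lt_toReal hr.le htop] at h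
      · rwa [lt_rearr_iff hf hr hs, ENNReal.ofReal_lt_iff_lt_toReal hr.le htop]
    rw [this, Real.volume_Ioo, sub_zero, ENNReal.ofReal_toReal htop]

end Rearrangement

section LayerCake

variable {α : Type*} [MeasurableSpace α] {μ : Measure α} {g : α → ℝ}

lemma lintegral_ofReal_sub_eq_lintegral_meas_lt (hg : AEMeasurable g μ) (t : ℝ) :
    ∫⁻ a, ENNReal.ofReal (g a - t) ∂μ = ∫⁻ s in Ioi 0, μ {a | t + s < g a} := by
  calc ∫⁻ a, ENNReal.ofReal (g a - t) ∂μ = ∫⁻ a, ENNReal.ofReal (max (g a - t) 0) ∂μ := by simp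
    _ = ∫⁻ s in Ioi 0, μ {a | s < max (g a - t) 0} :=
      lintegral_eq_lintegral_meas_lt μ (ae_of_all _ fun _ => le_max_right _ _)
        ((hg.sub_const t).max aemeasurable_const)
    _ = ∫⁻ s in Ioi 0, μ {a | t + s < g a} := by
      refine setLIntegral_congr_fun measurableSet_Ioi fun s (hs : 0 < s) => ?_
      congr with a
      rw [lt_max_iff, or_iff_left hs.not_gt]
      constructor <;> intro <;> linarith

lemma lintegral_ofReal_sub_eq_of_meas_lt_eq {β : Type*} [MeasurableSpace β] {ν : Measure β}
    {h : β → ℝ} (hg : AEMeasurable g μ) (hh : AEMeasurable h ν) {t : ℝ}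
    (heq : ∀ s, t < s → μ {a | s < g a} = ν {b | s < h b}) :
    ∫⁻ a, ENNReal.ofReal (g a - t) ∂μ = ∫⁻ b, ENNReal.ofReal (h b - t) ∂ν := by
  rw [lintegral_ofReal_sub_eq_lintegral_meas_lt hg, lintegral_ofReal_sub_eq_lintegral_meas_lt hh]
  exact setLIntegral_congr_fun measurableSet_Ioi fun s (hs : 0 < s) =>
    heq _ (lt_add_of_pos_right t hs)

end LayerCake

lemma lintegral_ofReal_abs_sub_eq_rearr {f : ℝ → ℝ} (hf : IntegrableOn f (Ioi 0)) {t : ℝ}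
    (ht : 0 ≤ t) :
    ∫⁻ x in Ioi 0, ENNReal.ofReal (|f x| - t) = ∫⁻ r in Ioi 0, ENNReal.ofReal (rearr f r - t) :=
  lintegral_ofReal_sub_eq_of_meas_lt_eq hf.aemeasurable.abs (aemeasurable_rearr hf)
    fun _ hs => (volume_lt_rearr_eq_distribution hf (ht.trans hs.le)).symm

noncomputable def stopLoss (φ : ℝ → ℝ) (t : ℝ) : ℝ≥0∞ :=
  ∫⁻ r in Ioi 0, ENNReal.ofReal (φ r - t)

noncomputable def partialLIntegral (φ : ℝ → ℝ) (u : ℝ) : ℝ≥0∞ :=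
  ∫⁻ r in Ioc 0 u, ENNReal.ofReal (φ r)

section StopLoss

variable {φ : ℝ → ℝ}

lemma lintegral_Ioi_le_of_eq_zero {F : ℝ → ℝ≥0∞} {s : Set ℝ} (hs : MeasurableSet s)
    (hF : ∀ r, 0 < r → r ∉ s → F r = 0) :
    ∫⁻ r in Ioi 0, F r ≤ ∫⁻ r in s, F r := by
  calc ∫⁻ r in Ioi 0, F r = ∫⁻ r in Ioi 0, s.indicator F r := by
        refine setLIntegral_congr_fun measurableSet_Ioi fun r (hr : 0 < r) => ?_
        by_cases hrs : r ∈ s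
        · rw [indicator_of_mem hrs]
        · rw [indicator_of_notMem hrs, hF r hr hrs]
    _ ≤ ∫⁻ r, s.indicator F r := setLIntegral_le_lintegral _ _
    _ = ∫⁻ r in s, F r := lintegral_indicator hs F

lemma partialLIntegral_le_stopLoss_add (φ : ℝ → ℝ) (t u : ℝ) :
    partialLIntegral φ u ≤ stopLoss φ t + ENNReal.ofReal t * ENNReal.ofReal u := by
  calc partialLIntegral φ u ≤ ∫⁻ r in Ioc 0 u, (ENNReal.ofReal (φ r - t) + ENNReal.ofReal t) :=
        lintegral_mono fun r => by simpa using ENNReal.ofReal_add_le (p := φ r - t) (q := t)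
    _ = (∫⁻ r in Ioc 0 u, ENNReal.ofReal (φ r - t)) + ENNReal.ofReal t * ENNReal.ofReal u := by
        rw [lintegral_add_right _ measurable_const, setLIntegral_const, Real.volume_Ioc, sub_zero]
    _ ≤ stopLoss φ t + ENNReal.ofReal t * ENNReal.ofReal u := by
        gcongr
        exact lintegral_mono_set Ioc_subset_Ioi_self

lemma stopLoss_add_le_partialLIntegral_of_antitoneOn (hφ : AntitoneOn φ (Ioi 0)) {u : ℝ}
    (hu : 0 < u) (hφu : 0 ≤ φ u) :
    stopLoss φ (φ u) + ENNReal.ofReal (φ u) * ENNReal.ofReal u ≤ partialLIntegral φ u := by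
  have hvanish : ∀ r, 0 < r → r ∉ Ioc 0 u → ENNReal.ofReal (φ r - φ u) = 0 := fun r hr hru => by
    have hur : u < r := lt_of_not_ge fun h => hru ⟨hr, h⟩
    simpa using hφ hu hr hur.le
  calc stopLoss φ (φ u) + ENNReal.ofReal (φ u) * ENNReal.ofReal u
      ≤ (∫⁻ r in Ioc 0 u, ENNReal.ofReal (φ r - φ u)) +
          ENNReal.ofReal (φ u) * ENNReal.ofReal u := by
        gcongr
        exact lintegral_Ioi_le_of_eq_zero measurableSet_Ioc hvanish
    _ = ∫⁻ r in Ioc 0 u, (ENNReal.ofReal (φ r - φ u) + ENNReal.ofReal (φ u)) := by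
        rw [lintegral_add_right _ measurable_const, setLIntegral_const, Real.volume_Ioc, sub_zero]
    _ = partialLIntegral φ u := by
        refine setLIntegral_congr_fun measurableSet_Ioc fun r hr => ?_
        have : φ u ≤ φ r := hφ hr.1 hu hr.2
        rw [← ENNReal.ofReal_add (by linarith) hφu, sub_add_cancel]

lemma stopLoss_add_le_partialLIntegral {t a : ℝ} (ht : 0 ≤ t)
    (hlevel : ∀ r, 0 < r → (t < φ r ↔ r < a)) :
    stopLoss φ t + ENNReal.ofReal t * ENNReal.ofReal a ≤ partialLIntegral φ a := by
  have hvanish : ∀ r, 0 < r → r ∉ Ioo 0 a → ENNReal.ofReal (φ r - t) = 0 := fun r hr hra => by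
    have : ¬ t < φ r := fun h => hra ⟨hr, (hlevel r hr).1 h⟩
    simpa using not_lt.1 this
  calc stopLoss φ t + ENNReal.ofReal t * ENNReal.ofReal a
      ≤ (∫⁻ r in Ioo 0 a, ENNReal.ofReal (φ r - t)) + ENNReal.ofReal t * ENNReal.ofReal a := by
        gcongr
        exact lintegral_Ioi_le_of_eq_zero measurableSet_Ioo hvanish
    _ = ∫⁻ r in Ioo 0 a, (ENNReal.ofReal (φ r - t) + ENNReal.ofReal t) := by
        rw [lintegral_add_right _ measurable_const, setLIntegral_const, Real.volume_Ioo, sub_zero]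
    _ = ∫⁻ r in Ioo 0 a, ENNReal.ofReal (φ r) := by
        refine setLIntegral_congr_fun measurableSet_Ioo fun r hr => ?_
        have : t < φ r := (hlevel r hr.1).2 hr.2
        rw [← ENNReal.ofReal_add (by linarith) ht, sub_add_cancel]
    _ ≤ partialLIntegral φ a := lintegral_mono_set Ioo_subset_Ioc_self

lemma stopLoss_zero_eq_iSup (φ : ℝ → ℝ) : stopLoss φ 0 = ⨆ n : ℕ, partialLIntegral φ n := by
  have hunion : ⋃ n : ℕ, Ioc (0 : ℝ) n = Ioi 0 :=
    iUnion_Ioc_eq_Ioi_self_iff.2 fun r _ => exists_nat_ge r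
  simp_rw [stopLoss, partialLIntegral, sub_zero, ← hunion]
  exact setLIntegral_iUnion_of_directed _
    (Monotone.directed_le fun m n hmn => Ioc_subset_Ioc_right (Nat.cast_le.2 hmn))

end StopLoss

section Comparison

variable {f g : ℝ → ℝ}

lemma stopLoss_rearr_le (hf : IntegrableOn f (Ioi 0))
    (h : ∀ u, 0 ≤ u → partialLIntegral (rearr f) u ≤ partialLIntegral (rearr g) u)
    {t : ℝ} (ht : 0 ≤ t) :
    stopLoss (rearr f) t ≤ stopLoss (rearr g) t := by
  rcases ht.eq_or_lt with rfl | htpos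
  · rw [stopLoss_zero_eq_iSup, stopLoss_zero_eq_iSup]
    exact iSup_mono fun n => h n n.cast_nonneg
  · set a := (distribution f t).toReal
    have hlevel : ∀ r, 0 < r → (t < rearr f r ↔ r < a) := fun r hr => by
      rw [lt_rearr_iff hf hr ht, ENNReal.ofReal_lt_iff_lt_toReal hr.le
        (distribution_lt_top hf htpos).ne]
    have hsum : stopLoss (rearr f) t + ENNReal.ofReal t * ENNReal.ofReal a ≤
        stopLoss (rearr g) t + ENNReal.ofReal t * ENNReal.ofReal a :=
      calc _ ≤ partialLIntegral (rearr f) a := stopLoss_add_le_partialLIntegral ht hlevel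
        _ ≤ partialLIntegral (rearr g) a := h a ENNReal.toReal_nonneg
        _ ≤ _ := partialLIntegral_le_stopLoss_add (rearr g) t a
    exact (ENNReal.add_le_add_iff_right (by finiteness)).1 hsum

lemma partialLIntegral_rearr_le (hg : IntegrableOn g (Ioi 0))
    (h : ∀ t, 0 ≤ t → stopLoss (rearr f) t ≤ stopLoss (rearr g) t) {u : ℝ} (hu : 0 ≤ u) :
    partialLIntegral (rearr f) u ≤ partialLIntegral (rearr g) u := by
  rcases hu.eq_or_lt with rfl | hupos
  · simp [partialLIntegral]
  · set t := rearr g u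
    calc partialLIntegral (rearr f) u
        ≤ stopLoss (rearr f) t + ENNReal.ofReal t * ENNReal.ofReal u :=
          partialLIntegral_le_stopLoss_add _ t u
      _ ≤ stopLoss (rearr g) t + ENNReal.ofReal t * ENNReal.ofReal u := by
          gcongr
          exact h t (rearr_nonneg g u)
      _ ≤ partialLIntegral (rearr g) u :=
          stopLoss_add_le_partialLIntegral_of_antitoneOn (rearr_antitoneOn hg) hupos
            (rearr_nonneg g u)

lemma stopLoss_rearr_lt_top (hf : IntegrableOn f (Ioi 0)) {t : ℝ} (ht : 0 ≤ t) :
    stopLoss (rearr f) t < ∞ := by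
  rw [stopLoss, ← lintegral_ofReal_abs_sub_eq_rearr hf ht]
  refine lt_of_le_of_lt (lintegral_mono fun x => ?_) hf.2
  rw [Real.enorm_eq_ofReal_abs]
  exact ENNReal.ofReal_le_ofReal (by linarith)

lemma integral_rearr_eq_toReal (hf : IntegrableOn f (Ioi 0)) (u : ℝ) :
    ∫ r in Ioc 0 u, rearr f r = (partialLIntegral (rearr f) u).toReal :=
  integral_eq_lintegral_of_nonneg_ae (ae_of_all _ (rearr_nonneg f))
    ((aemeasurable_rearr hf).mono_measure
      (Measure.restrict_mono Ioc_subset_Ioi_self le_rfl)).aestronglyMeasurable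

lemma subMaj_iff_partialLIntegral_le (hf : IntegrableOn f (Ioi 0))
    (hg : IntegrableOn g (Ioi 0)) :
    SubMaj f g ↔ ∀ u, 0 ≤ u → partialLIntegral (rearr f) u ≤ partialLIntegral (rearr g) u := by
  have hfin : ∀ {k : ℝ → ℝ}, IntegrableOn k (Ioi 0) → ∀ u, partialLIntegral (rearr k) u ≠ ∞ :=
    fun hk u => ne_top_of_le_ne_top (stopLoss_rearr_lt_top hk le_rfl).ne <| by
      simpa [stopLoss, partialLIntegral] using lintegral_mono_set Ioc_subset_Ioi_self
  simp only [SubMaj, integral_rearr_eq_toReal hf, integral_rearr_eq_toReal hg,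
    ENNReal.toReal_le_toReal (hfin hf _) (hfin hg _)]

end Comparison

section PositivePart

variable {x y : ℝ → ℝ}

lemma MeasureTheory.IntegrableOn.posPart' {s : Set ℝ} {μ : Measure ℝ} (hx : IntegrableOn x s μ) :
    IntegrableOn (posPart' x) s μ :=
  hx.pos_part

lemma integral_max_sub_eq_stopLoss (hx : IntegrableOn x (Ioi 0)) {t : ℝ} (ht : 0 ≤ t) :
    ∫ s in Ioi 0, max (x s - t) 0 = (stopLoss (rearr (posPart' x)) t).toReal := by
  rw [integral_eq_lintegral_of_nonneg_ae (f := fun s => max (x s - t) 0)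
    (ae_of_all _ fun _ => le_max_right _ _)
    ((hx.aemeasurable.sub_const t).max aemeasurable_const).aestronglyMeasurable,
    stopLoss, ← lintegral_ofReal_abs_sub_eq_rearr hx.posPart' ht]
  congr 1
  refine lintegral_congr fun s => ?_
  rw [posPart', abs_of_nonneg (le_max_right _ _)]
  rcases le_total (x s) 0 with hs | hs
  · rw [max_eq_right hs, max_eq_right (by linarith), ENNReal.ofReal_zero,
      ENNReal.ofReal_of_nonpos (by linarith)]
  · simp [hs]

/-- For `t < 0` the function `(x - t)₊` is at least `-t - |x|`, so it is not integrable on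
`(0,∞)` and its Bochner integral is the junk value `0`. -/
lemma integral_max_sub_eq_zero (hx : IntegrableOn x (Ioi 0)) {t : ℝ} (ht : t < 0) :
    ∫ s in Ioi 0, max (x s - t) 0 = 0 := by
  refine integral_undef fun hint => ?_
  have hconst : IntegrableOn (fun _ => -t) (Ioi (0 : ℝ)) :=
    (hint.add hx.abs).mono' aemeasurable_const.aestronglyMeasurable
      (ae_of_all _ fun s => by
        rw [Real.norm_eq_abs, abs_of_pos (neg_pos.2 ht)]
        have := neg_abs_le (x s)
        simp only [Pi.add_apply]
        linarith [le_max_left (x s - t) 0])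
  simp [integrableOn_const_iff, ht.ne] at hconst

lemma subMaj_posPart_iff (hx : IntegrableOn x (Ioi 0)) (hy : IntegrableOn y (Ioi 0)) :
    SubMaj (posPart' x) (posPart' y) ↔
      ∀ t, ∫ s in Ioi 0, max (x s - t) 0 ≤ ∫ s in Ioi 0, max (y s - t) 0 := by
  rw [subMaj_iff_partialLIntegral_le hx.posPart' hy.posPart']
  constructor
  · intro h t
    rcases lt_or_ge t 0 with ht | ht
    · rw [integral_max_sub_eq_zero hx ht, integral_max_sub_eq_zero hy ht]
    · rw [integral_max_sub_eq_stopLoss hx ht, integral_max_sub_eq_stopLoss hy ht]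
      exact ENNReal.toReal_mono (stopLoss_rearr_lt_top hy.posPart' ht).ne
        (stopLoss_rearr_le hx.posPart' h ht)
  · intro h
    refine fun u hu => partialLIntegral_rearr_le hy.posPart' (fun t ht => ?_) hu
    have := h t
    rwa [integral_max_sub_eq_stopLoss hx ht, integral_max_sub_eq_stopLoss hy ht,
      ENNReal.toReal_le_toReal (stopLoss_rearr_lt_top hx.posPart' ht).ne
        (stopLoss_rearr_lt_top hy.posPart' ht).ne] at this

end PositivePart

theorem stmt5_general (x y : ℝ → ℝ) (hx : IntegrableOn x (Set.Ioi 0))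
    (hy : IntegrableOn y (Set.Ioi 0)) :
    (SubMaj (posPart' x) (posPart' y) ∧ SubMaj (negPart' x) (negPart' y)) ↔
      (∀ t : ℝ,
        (∫ s in Set.Ioi (0:ℝ), max (x s - t) 0) ≤ (∫ s in Set.Ioi (0:ℝ), max (y s - t) 0) ∧
        (∫ s in Set.Ioi (0:ℝ), max (-x s - t) 0) ≤ ∫ s in Set.Ioi (0:ℝ), max (-y s - t) 0) := by
  have hneg : ∀ z : ℝ → ℝ, negPart' z = posPart' (fun s => -z s) := fun _ => rfl
  rw [hneg x, hneg y, subMaj_posPart_iff hx hy,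
    subMaj_posPart_iff (x := fun s => -x s) (y := fun s => -y s) hx.neg hy.neg, forall_and]

/-- For `x, y ∈ L¹(0,∞)` with `∫x = ∫y`: `x ≺ y` iff for every `t ∈ ℝ`,
`∫(x-t)₊ ≤ ∫(y-t)₊` and `∫(-x-t)₊ ≤ ∫(-y-t)₊`. -/
theorem stmt5 (x y : ℝ → ℝ) (hx : IntegrableOn x (Set.Ioi 0))
    (hy : IntegrableOn y (Set.Ioi 0))
    (hInt : (∫ t in Set.Ioi (0:ℝ), x t) = ∫ t in Set.Ioi (0:ℝ), y t) :
    (SubMaj (posPart' x) (posPart' y) ∧ SubMaj (negPart' x) (negPart' y)) ↔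
      (∀ t : ℝ,
        (∫ s in Set.Ioi (0:ℝ), max (x s - t) 0) ≤ (∫ s in Set.Ioi (0:ℝ), max (y s - t) 0) ∧
        (∫ s in Set.Ioi (0:ℝ), max (-x s - t) 0) ≤ ∫ s in Set.Ioi (0:ℝ), max (-y s - t) 0) :=
  stmt5_general x y hx hy
end

section
/- Let y ∈ L¹(0,1) and let Ω(y) = { x ∈ L¹(0,1) : x ≺ y } be its Hardy–Littlewood–Pólya orbit. Then Ω(y) is convex and closed in the L¹-norm. -/
open MeasureTheory Set

/-- Right-continuous decreasing rearrangement (spectral scale, allowing negative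
values) of a function on `(0,1)` with Lebesgue measure. -/
noncomputable def lam01 (f : ℝ → ℝ) (t : ℝ) : ℝ :=
  sInf {u : ℝ | (volume.restrict (Set.Ioo (0:ℝ) 1)) {a | u < f a} ≤ ENNReal.ofReal t}

/-- Hardy–Littlewood–Pólya majorization on `(0,1)`:
`∫₀ˢ λ(x) ≤ ∫₀ˢ λ(y)` for all `s ∈ [0,1)` with equality at `s = 1`. -/
def Maj01 (x y : ℝ → ℝ) : Prop :=
  (∀ s ∈ Set.Ico (0:ℝ) 1,
    (∫ t in Set.Ioc (0:ℝ) s, lam01 x t) ≤ ∫ t in Set.Ioc (0:ℝ) s, lam01 y t) ∧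
  (∫ t in Set.Ioc (0:ℝ) 1, lam01 x t) = ∫ t in Set.Ioc (0:ℝ) 1, lam01 y t

/-- The Hardy–Littlewood–Pólya orbit of `y` in `L¹(0,1)`. -/
def Omega01 (y : ℝ → ℝ) : Set (ℝ → ℝ) :=
  {x | MeasureTheory.IntegrableOn x (Set.Ioo 0 1) ∧ Maj01 x y}

/-!
For integrable `x` and `y`, majorization `x ≺ y` is equivalent to the convex-order conditions
`∫ (x - r)⁺ ≤ ∫ (y - r)⁺` for every `r ∈ ℝ` together with `∫ x = ∫ y`. The rearrangement `λ(·; f)`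
is equidistributed with `f`, so `∫ (λ(·; f) - r)⁺ = ∫ (f - r)⁺`. Since `λ` is decreasing,
`∫₀ˢ λ ≤ s r + ∫ (λ - r)⁺` for all `r`, with equality for `r = λ(s)`, and also when
`s = m({f > r})`. The convex-order conditions are preserved under convex combinations (as
`v ↦ (v - r)⁺` is convex) and under `L¹` limits (as it is `1`-Lipschitz).
-/

open Filter Topology ProbabilityTheory
open scoped ENNReal

local notation "μ₀" => volume.restrict (Ioo (0:ℝ) 1)

section DistributionFunction

variable {α : Type*} [MeasurableSpace α] {μ : Measure α} {f : α → ℝ}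

lemma tendsto_measure_setOf_lt_atTop [IsFiniteMeasure μ] (hf : AEMeasurable f μ) :
    Tendsto (fun u : ℝ => μ {a | u < f a}) atTop (𝓝 0) := by
  have h := tendsto_measure_iInter_atTop (μ := μ) (s := fun u : ℝ => {a | u < f a})
    (fun _ => nullMeasurableSet_lt aemeasurable_const hf)
    (fun _ _ huv _ ha => huv.trans_lt ha) ⟨0, measure_ne_top μ _⟩
  rwa [iInter_eq_empty_iff.2 fun a => ⟨f a, lt_irrefl (f a)⟩, measure_empty] at h

lemma tendsto_measure_setOf_lt_atBot :
    Tendsto (fun u : ℝ => μ {a | u < f a}) atBot (𝓝 (μ univ)) := by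
  have h := tendsto_measure_iUnion_atBot (μ := μ) (s := fun u : ℝ => {a | u < f a})
    (fun _ _ huv _ ha => huv.trans_lt ha)
  rwa [iUnion_eq_univ_iff.2 fun a => ⟨f a - 1, sub_one_lt (f a)⟩] at h

-- Right continuity of `u ↦ μ {f > u}`: the infimum defining the rearrangement is attained.
lemma measure_setOf_csInf_lt_le {S : Set ℝ} (hS : S.Nonempty) (hS' : BddBelow S) {c : ℝ≥0∞}
    (h : ∀ u ∈ S, μ {a | u < f a} ≤ c) : μ {a | sInf S < f a} ≤ c := by
  obtain ⟨u, hu_anti, hu_lim, hu_mem⟩ := exists_seq_tendsto_sInf hS hS'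
  have hunion : {a | sInf S < f a} = ⋃ n, {a | u n < f a} := by
    ext a
    simp only [mem_ofPred_eq, mem_iUnion]
    exact ⟨fun ha => (hu_lim.eventually (gt_mem_nhds ha)).exists,
      fun ⟨n, hn⟩ => (csInf_le hS' (hu_mem n)).trans_lt hn⟩
  have hmono : Monotone fun n => {a | u n < f a} := fun _ _ hmn _ ha => (hu_anti hmn).trans_lt ha
  rw [hunion, hmono.measure_iUnion]
  exact iSup_le fun n => h _ (hu_mem n)

end DistributionFunction

section Rearrangement

variable {f : ℝ → ℝ}

instance : IsProbabilityMeasure μ₀ := ⟨by simp [Real.volume_Ioo]⟩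

lemma lam01_setOf_nonempty (hf : AEMeasurable f μ₀) {t : ℝ} (ht : 0 < t) :
    {u : ℝ | μ₀ {a | u < f a} ≤ ENNReal.ofReal t}.Nonempty :=
  ((tendsto_measure_setOf_lt_atTop hf).eventually
    (gt_mem_nhds (ENNReal.ofReal_pos.2 ht))).exists.imp fun _ => le_of_lt

lemma lam01_setOf_bddBelow {t : ℝ} (ht : t < 1) :
    BddBelow {u : ℝ | μ₀ {a | u < f a} ≤ ENNReal.ofReal t} := by
  have hlt : ENNReal.ofReal t < μ₀ univ := by rwa [measure_univ, ENNReal.ofReal_lt_one]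
  obtain ⟨v, hv⟩ :=
    (tendsto_measure_setOf_lt_atBot.eventually (lt_mem_nhds hlt)).exists_forall_of_atBot
  exact ⟨v, fun u hu => not_lt.1 fun huv => (hv u huv.le).not_ge hu⟩

lemma lt_lam01_iff (hf : AEMeasurable f μ₀) {t : ℝ} (ht : t ∈ Ioo (0:ℝ) 1) (u : ℝ) :
    u < lam01 f t ↔ ENNReal.ofReal t < μ₀ {a | u < f a} := by
  refine ⟨fun h => not_le.1 fun hu => h.not_ge (csInf_le (lam01_setOf_bddBelow ht.2) hu),
    fun h => not_le.1 fun hu => h.not_ge ?_⟩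
  exact (measure_mono fun a (ha : u < f a) => hu.trans_lt ha).trans
    (measure_setOf_csInf_lt_le (lam01_setOf_nonempty hf ht.1) (lam01_setOf_bddBelow ht.2)
      fun _ hv => hv)

lemma lam01_antitoneOn (hf : AEMeasurable f μ₀) : AntitoneOn (lam01 f) (Ioo 0 1) :=
  fun _ ht _ ht' htt' => csInf_le_csInf (lam01_setOf_bddBelow ht'.2)
    (lam01_setOf_nonempty hf ht.1) fun _ hu => hu.trans (ENNReal.ofReal_le_ofReal htt')

lemma aemeasurable_lam01 (hf : AEMeasurable f μ₀) : AEMeasurable (lam01 f) μ₀ :=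
  aemeasurable_restrict_of_antitoneOn measurableSet_Ioo (lam01_antitoneOn hf)

lemma setOf_lt_lam01_inter_Ioo (hf : AEMeasurable f μ₀) (u : ℝ) :
    {t | u < lam01 f t} ∩ Ioo 0 1 = Ioo 0 ((μ₀).real {a | u < f a}) := by
  ext t
  simp only [mem_inter_iff, mem_ofPred_eq, mem_Ioo]
  constructor
  · rintro ⟨hu, ht0, ht1⟩
    rw [lt_lam01_iff hf ⟨ht0, ht1⟩, ENNReal.ofReal_lt_iff_lt_toReal ht0.le (measure_ne_top _ _)]
      at hu
    exact ⟨ht0, hu⟩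
  · rintro ⟨ht0, htD⟩
    have ht1 : t < 1 := htD.trans_le measureReal_le_one
    rw [lt_lam01_iff hf ⟨ht0, ht1⟩, ENNReal.ofReal_lt_iff_lt_toReal ht0.le (measure_ne_top _ _)]
    exact ⟨htD, ht0, ht1⟩

lemma measure_setOf_lt_lam01 (hf : AEMeasurable f μ₀) (u : ℝ) :
    μ₀ {t | u < lam01 f t} = μ₀ {a | u < f a} := by
  rw [Measure.restrict_apply' measurableSet_Ioo, setOf_lt_lam01_inter_Ioo hf, Real.volume_Ioo,
    sub_zero, measureReal_def, ENNReal.ofReal_toReal (measure_ne_top _ _)]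

theorem identDistrib_lam01 (hf : AEMeasurable f μ₀) : IdentDistrib (lam01 f) f μ₀ μ₀ where
  aemeasurable_fst := aemeasurable_lam01 hf
  aemeasurable_snd := hf
  map_eq := by
    refine Measure.ext_of_Iic _ _ fun u => ?_
    have hcompl : ∀ g : ℝ → ℝ, g ⁻¹' Iic u = {a | u < g a}ᶜ := fun g => by ext; simp
    rw [Measure.map_apply_of_aemeasurable (aemeasurable_lam01 hf) measurableSet_Iic,
      Measure.map_apply_of_aemeasurable hf measurableSet_Iic, hcompl, hcompl,
      prob_compl_eq_one_sub₀ (nullMeasurableSet_lt aemeasurable_const (aemeasurable_lam01 hf)),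
      prob_compl_eq_one_sub₀ (nullMeasurableSet_lt aemeasurable_const hf),
      measure_setOf_lt_lam01 hf]

lemma integrable_lam01 (hf : Integrable f μ₀) : Integrable (lam01 f) μ₀ :=
  (identDistrib_lam01 hf.aemeasurable).integrable_iff.2 hf

lemma integral_max_lam01_sub (hf : AEMeasurable f μ₀) (r : ℝ) :
    ∫ t, max (lam01 f t - r) 0 ∂μ₀ = ∫ a, max (f a - r) 0 ∂μ₀ :=
  ((identDistrib_lam01 hf).comp ((measurable_id.sub_const r).max measurable_const)).integral_eq

lemma setIntegral_Ioc_lam01 (hf : Integrable f μ₀) :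
    ∫ t in Ioc 0 1, lam01 f t = ∫ a, f a ∂μ₀ := by
  rw [integral_Ioc_eq_integral_Ioo]
  exact (identDistrib_lam01 hf.aemeasurable).integral_eq

end Rearrangement

section UnitInterval

variable {g : ℝ → ℝ} {s : ℝ}

lemma setIntegral_Ioo_sub_const (hg : IntegrableOn g (Ioo 0 1)) (hs : s ∈ Icc (0:ℝ) 1) (r : ℝ) :
    ∫ t in Ioo 0 s, (g t - r) = (∫ t in Ioc 0 s, g t) - s * r := by
  rw [integral_sub (hg.mono_set (Ioo_subset_Ioo_right hs.2)) (integrableOn_const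
      (by simp [Real.volume_Ioo])), setIntegral_const, Real.volume_real_Ioo_of_le hs.1,
    sub_zero, smul_eq_mul, integral_Ioc_eq_integral_Ioo]

lemma setIntegral_Ioc_le (hg : IntegrableOn g (Ioo 0 1)) (hs : s ∈ Icc (0:ℝ) 1) (r : ℝ) :
    ∫ t in Ioc 0 s, g t ≤ s * r + ∫ t in Ioo 0 1, max (g t - r) 0 := by
  have hcut : IntegrableOn (fun t => max (g t - r) 0) (Ioo 0 1) :=
    (hg.sub (integrableOn_const (by simp [Real.volume_Ioo]))).pos_part
  have hsub : Ioo 0 s ⊆ Ioo (0:ℝ) 1 := Ioo_subset_Ioo_right hs.2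
  calc ∫ t in Ioc 0 s, g t = s * r + ∫ t in Ioo 0 s, (g t - r) := by
        rw [setIntegral_Ioo_sub_const hg hs]; ring
    _ ≤ s * r + ∫ t in Ioo 0 s, max (g t - r) 0 :=
        add_le_add_right (integral_mono ((hg.mono_set hsub).sub (integrableOn_const (by simp)))
          (hcut.mono_set hsub) fun t => le_max_left _ _) _
    _ ≤ s * r + ∫ t in Ioo 0 1, max (g t - r) 0 :=
        add_le_add_right (setIntegral_mono_set hcut (ae_of_all _ fun t => le_max_right _ _)
          hsub.eventuallyLE) _

lemma integral_max_sub_eq_setIntegral (hg : IntegrableOn g (Ioo 0 1)) (hs : s ∈ Icc (0:ℝ) 1)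
    {r : ℝ} (hg_lt : ∀ t ∈ Ioo (0:ℝ) 1, t < s → r ≤ g t)
    (hg_ge : ∀ t ∈ Ioo (0:ℝ) 1, s ≤ t → g t ≤ r) :
    ∫ t in Ioo 0 1, max (g t - r) 0 = (∫ t in Ioc 0 s, g t) - s * r := by
  have hcut : ∀ t ∈ Ioo (0:ℝ) 1,
      max (g t - r) 0 = (Ioo 0 s).indicator (fun t => g t - r) t := by
    intro t ht
    by_cases hts : t < s
    · rw [indicator_of_mem (show t ∈ Ioo 0 s from ⟨ht.1, hts⟩), max_eq_left (sub_nonneg.2 (hg_lt t ht hts))]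
    · rw [indicator_of_notMem fun h => hts h.2,
        max_eq_right (sub_nonpos.2 (hg_ge t ht (not_lt.1 hts)))]
  rw [setIntegral_congr_fun measurableSet_Ioo hcut, integral_indicator measurableSet_Ioo,
    Measure.restrict_restrict measurableSet_Ioo,
    inter_eq_self_of_subset_left (Ioo_subset_Ioo_right hs.2), setIntegral_Ioo_sub_const hg hs]

end UnitInterval

section ConvexOrder

variable {α : Type*} [MeasurableSpace α] {μ : Measure α} {x x' y z : α → ℝ}

/-- The integral form of majorization: `x` precedes `y` in the convex order of `μ`. -/
def ConvexOrderLE (μ : Measure α) (x y : α → ℝ) : Prop :=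
  (∀ r : ℝ, ∫ a, max (x a - r) 0 ∂μ ≤ ∫ a, max (y a - r) 0 ∂μ) ∧ ∫ a, x a ∂μ = ∫ a, y a ∂μ

lemma abs_integral_sub_le (hx : Integrable x μ) (hz : Integrable z μ) :
    |∫ a, z a ∂μ - ∫ a, x a ∂μ| ≤ ∫ a, |x a - z a| ∂μ := by
  rw [← integral_sub hz hx]
  simpa only [abs_sub_comm] using abs_integral_le_integral_abs (f := fun a => z a - x a)

variable [IsFiniteMeasure μ]

lemma MeasureTheory.Integrable.max_sub_const (hx : Integrable x μ) (r : ℝ) :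
    Integrable (fun a => max (x a - r) 0) μ :=
  (hx.sub (integrable_const r)).pos_part

lemma integral_max_sub_combo_le (hx : Integrable x μ) (hx' : Integrable x' μ) {b b' : ℝ}
    (hb : 0 ≤ b) (hb' : 0 ≤ b') (hbb' : b + b' = 1) (r : ℝ) :
    ∫ a, max (b * x a + b' * x' a - r) 0 ∂μ
      ≤ b * ∫ a, max (x a - r) 0 ∂μ + b' * ∫ a, max (x' a - r) 0 ∂μ := by
  have hr : r = b * r + b' * r := by rw [← add_mul, hbb', one_mul]
  rw [← integral_const_mul, ← integral_const_mul,
    ← integral_add ((hx.max_sub_const r).const_mul b) ((hx'.max_sub_const r).const_mul b')]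
  refine integral_mono (((hx.const_mul b).add (hx'.const_mul b')).max_sub_const r)
    (((hx.max_sub_const r).const_mul b).add ((hx'.max_sub_const r).const_mul b'))
    fun a => max_le ?_ (by positivity)
  nlinarith [mul_le_mul_of_nonneg_left (le_max_left (x a - r) 0) hb,
    mul_le_mul_of_nonneg_left (le_max_left (x' a - r) 0) hb']

lemma convex_setOf_convexOrderLE : Convex ℝ {x | Integrable x μ ∧ ConvexOrderLE μ x y} := by
  rintro x ⟨hx, hxy_cut, hxy_mean⟩ x' ⟨hx', hx'y_cut, hx'y_mean⟩ b b' hb hb' hbb'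
  have hcombo : b • x + b' • x' = fun a => b * x a + b' * x' a := rfl
  rw [hcombo]
  refine ⟨(hx.const_mul b).add (hx'.const_mul b'), fun r => ?_, ?_⟩
  · calc ∫ a, max (b * x a + b' * x' a - r) 0 ∂μ
        ≤ b * ∫ a, max (x a - r) 0 ∂μ + b' * ∫ a, max (x' a - r) 0 ∂μ :=
          integral_max_sub_combo_le hx hx' hb hb' hbb' r
      _ ≤ b * ∫ a, max (y a - r) 0 ∂μ + b' * ∫ a, max (y a - r) 0 ∂μ :=
          add_le_add (mul_le_mul_of_nonneg_left (hxy_cut r) hb)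
            (mul_le_mul_of_nonneg_left (hx'y_cut r) hb')
      _ = ∫ a, max (y a - r) 0 ∂μ := by rw [← add_mul, hbb', one_mul]
  · rw [integral_add (hx.const_mul b) (hx'.const_mul b'), integral_const_mul,
      integral_const_mul, hxy_mean, hx'y_mean, ← add_mul, hbb', one_mul]

lemma integral_max_sub_le_add (hx : Integrable x μ) (hz : Integrable z μ) (r : ℝ) :
    ∫ a, max (z a - r) 0 ∂μ ≤ ∫ a, max (x a - r) 0 ∂μ + ∫ a, |x a - z a| ∂μ := by
  have habs : Integrable (fun a => |x a - z a|) μ := (hx.sub hz).abs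
  rw [← integral_add (hx.max_sub_const r) habs]
  refine integral_mono (hz.max_sub_const r) ((hx.max_sub_const r).add habs)
    fun a => max_le ?_ (by positivity)
  linarith [le_max_left (x a - r) 0, neg_le_abs (x a - z a)]

lemma ConvexOrderLE.of_tendsto {x : ℕ → α → ℝ} (hx : ∀ n, Integrable (x n) μ)
    (hz : Integrable z μ) (hxy : ∀ n, ConvexOrderLE μ (x n) y)
    (hlim : Tendsto (fun n => ∫ a, |x n a - z a| ∂μ) atTop (𝓝 0)) : ConvexOrderLE μ z y := by
  refine ⟨fun r => ?_, ?_⟩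
  · have hbound := hlim.const_add (∫ a, max (y a - r) 0 ∂μ)
    rw [add_zero] at hbound
    exact ge_of_tendsto' hbound fun n =>
      (integral_max_sub_le_add (hx n) hz r).trans (add_le_add_left ((hxy n).1 r) _)
  · have hbound : |∫ a, z a ∂μ - ∫ a, y a ∂μ| ≤ 0 :=
      ge_of_tendsto' hlim fun n => (hxy n).2 ▸ abs_integral_sub_le (hx n) hz
    exact sub_eq_zero.1 (abs_nonpos_iff.1 hbound)

end ConvexOrder

section Majorization

variable {f x y : ℝ → ℝ}

lemma integral_max_lam01_sub_eq_setIntegral (hf : Integrable f μ₀) (r : ℝ) :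
    ∫ t, max (lam01 f t - r) 0 ∂μ₀
      = (∫ t in Ioc 0 ((μ₀).real {a | r < f a}), lam01 f t) - (μ₀).real {a | r < f a} * r := by
  have hlevel := setOf_lt_lam01_inter_Ioo hf.aemeasurable r
  refine integral_max_sub_eq_setIntegral (integrable_lam01 hf)
    ⟨measureReal_nonneg, measureReal_le_one⟩ (fun t ht htD => ?_) (fun t ht hDt => ?_)
  · have hmem : t ∈ {t | r < lam01 f t} ∩ Ioo 0 1 := by rw [hlevel]; exact ⟨ht.1, htD⟩
    exact hmem.1.le
  · refine not_lt.1 fun hr => hDt.not_gt ?_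
    have hmem : t ∈ Ioo 0 ((μ₀).real {a | r < f a}) := by rw [← hlevel]; exact ⟨hr, ht⟩
    exact hmem.2

lemma Maj01.convexOrderLE (h : Maj01 x y) (hx : Integrable x μ₀) (hy : Integrable y μ₀) :
    ConvexOrderLE μ₀ x y := by
  refine ⟨fun r => ?_, by rw [← setIntegral_Ioc_lam01 hx, ← setIntegral_Ioc_lam01 hy, h.2]⟩
  set D := (μ₀).real {a | r < x a}
  have hD : D ∈ Icc (0:ℝ) 1 := ⟨measureReal_nonneg, measureReal_le_one⟩
  have hmaj : ∫ t in Ioc 0 D, lam01 x t ≤ ∫ t in Ioc 0 D, lam01 y t := by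
    rcases hD.2.lt_or_eq with hD1 | hD1
    · exact h.1 D ⟨hD.1, hD1⟩
    · rw [hD1]; exact h.2.le
  calc ∫ a, max (x a - r) 0 ∂μ₀
      = (∫ t in Ioc 0 D, lam01 x t) - D * r := by
        rw [← integral_max_lam01_sub hx.aemeasurable, integral_max_lam01_sub_eq_setIntegral hx]
    _ ≤ (∫ t in Ioc 0 D, lam01 y t) - D * r := by linarith
    _ ≤ ∫ t, max (lam01 y t - r) 0 ∂μ₀ := by
        linarith [setIntegral_Ioc_le (integrable_lam01 hy) hD r]
    _ = ∫ a, max (y a - r) 0 ∂μ₀ := integral_max_lam01_sub hy.aemeasurable r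

lemma ConvexOrderLE.maj01 (h : ConvexOrderLE μ₀ x y) (hx : Integrable x μ₀)
    (hy : Integrable y μ₀) : Maj01 x y := by
  refine ⟨fun s hs => ?_, by rw [setIntegral_Ioc_lam01 hx, setIntegral_Ioc_lam01 hy, h.2]⟩
  rcases hs.1.eq_or_lt with rfl | hs0
  · simp
  set r := lam01 y s
  have hsIoo : s ∈ Ioo (0:ℝ) 1 := ⟨hs0, hs.2⟩
  have hanti := lam01_antitoneOn hy.aemeasurable
  have hy_eq : ∫ t, max (lam01 y t - r) 0 ∂μ₀ = (∫ t in Ioc 0 s, lam01 y t) - s * r :=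
    integral_max_sub_eq_setIntegral (integrable_lam01 hy) (Ioo_subset_Icc_self hsIoo)
      (fun t ht hts => hanti ht hsIoo hts.le) fun t ht hst => hanti hsIoo ht hst
  calc ∫ t in Ioc 0 s, lam01 x t
      ≤ s * r + ∫ t, max (lam01 x t - r) 0 ∂μ₀ :=
        setIntegral_Ioc_le (integrable_lam01 hx) (Ioo_subset_Icc_self hsIoo) r
    _ = s * r + ∫ a, max (x a - r) 0 ∂μ₀ := by rw [integral_max_lam01_sub hx.aemeasurable]
    _ ≤ s * r + ∫ a, max (y a - r) 0 ∂μ₀ := add_le_add_right (h.1 r) _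
    _ = ∫ t in Ioc 0 s, lam01 y t := by
        rw [← integral_max_lam01_sub hy.aemeasurable, hy_eq]; ring

theorem maj01_iff_convexOrderLE (hx : Integrable x μ₀) (hy : Integrable y μ₀) :
    Maj01 x y ↔ ConvexOrderLE μ₀ x y :=
  ⟨fun h => h.convexOrderLE hx hy, fun h => h.maj01 hx hy⟩

lemma omega01_eq (hy : Integrable y μ₀) :
    Omega01 y = {x | Integrable x μ₀ ∧ ConvexOrderLE μ₀ x y} :=
  Set.ext fun _ => and_congr_right fun hx => maj01_iff_convexOrderLE hx hy

end Majorization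

/-- `Ω(y)` is convex and closed in the `L¹(0,1)`-norm. -/
theorem stmt12 (y : ℝ → ℝ) (hy : IntegrableOn y (Set.Ioo 0 1)) :
    Convex ℝ (Omega01 y) ∧
    (∀ (x : ℕ → ℝ → ℝ) (z : ℝ → ℝ), (∀ n, x n ∈ Omega01 y) →
      IntegrableOn z (Set.Ioo 0 1) →
      Filter.Tendsto (fun n => ∫ t in Set.Ioo (0:ℝ) 1, |x n t - z t|)
        Filter.atTop (nhds 0) →
      z ∈ Omega01 y) := by
  rw [omega01_eq hy]
  exact ⟨convex_setOf_convexOrderLE, fun x z hx hz hlim =>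
    ⟨hz, ConvexOrderLE.of_tendsto (fun n => (hx n).1) hz (fun n => (hx n).2) hlim⟩⟩
end

section
/- Let x, x₁, x₂ be integrable real-valued functions on a measure space with x = (x₁ + x₂)/2. If the decreasing rearrangements satisfy μ((x₁)₊) = μ((x₂)₊) = μ(x₊) and μ((x₁)₋) = μ((x₂)₋) = μ(x₋), then x = x₁ = x₂ almost everywhere. -/
open MeasureTheory Set

/-- Decreasing rearrangement of `|f|` with respect to a measure `ν`. -/
noncomputable def rearrM {α : Type*} [MeasurableSpace α] (ν : Measure α) (f : α → ℝ)
    (t : ℝ) : ℝ :=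
  sInf {s : ℝ | 0 ≤ s ∧ ν {p | s < |f p|} ≤ ENNReal.ofReal t}

/-!
Equal rearrangements give equal distribution functions `u ↦ ν {u < f}` for `u > 0`, hence, by
the layer-cake formula, `∫ (x₁ - c)₊ = ∫ (x₂ - c)₊ = ∫ (x - c)₊` for every `c ≥ 0`. Since
`2 (x - c)₊ ≤ (x₁ - c)₊ + (x₂ - c)₊`, equality of the integrals forces equality a.e., that is,
`x₁ - c` and `x₂ - c` a.e. do not have strictly opposite signs. The negative parts give the same
for `c ≤ 0`, so a.e. no rational number lies strictly between `x₁` and `x₂`.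
-/

open Filter Topology
open scoped ENNReal

lemma ENNReal.le_of_forall_le_ofReal_imp {a b : ℝ≥0∞} (hb : b ≠ ∞)
    (h : ∀ t : ℝ, 0 < t → b ≤ ENNReal.ofReal t → a ≤ ENNReal.ofReal t) : a ≤ b := by
  refine ENNReal.le_of_forall_pos_le_add fun ε hε _ => ?_
  have hbε : b + ε ≠ ∞ := ENNReal.add_ne_top.2 ⟨hb, ENNReal.coe_ne_top⟩
  have hpos : 0 < (b + ε).toReal :=
    ENNReal.toReal_pos (by simp [hε.ne']) hbε
  simpa [ENNReal.ofReal_toReal hbε] using h _ hpos (by simp [ENNReal.ofReal_toReal hbε])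

lemma ENNReal.ofReal_add_lt_of_mul_neg {a b : ℝ} (h : a * b < 0) :
    ENNReal.ofReal (a + b) < ENNReal.ofReal a + ENNReal.ofReal b := by
  rcases mul_neg_iff.1 h with ⟨ha, hb⟩ | ⟨ha, hb⟩
  · rw [ENNReal.ofReal_of_nonpos hb.le, add_zero]
    exact (ENNReal.ofReal_lt_ofReal_iff ha).2 (by linarith)
  · rw [ENNReal.ofReal_of_nonpos ha.le, zero_add]
    exact (ENNReal.ofReal_lt_ofReal_iff hb).2 (by linarith)

lemma Real.eq_of_forall_rat_mul_sub_nonneg {a b : ℝ} (h : ∀ q : ℚ, 0 ≤ (a - q) * (b - q)) :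
    a = b := by
  by_contra hne
  rcases lt_or_gt_of_ne hne with hab | hab
  · obtain ⟨q, haq, hqb⟩ := exists_rat_btwn hab
    exact (h q).not_gt (mul_neg_of_neg_of_pos (by linarith) (by linarith))
  · obtain ⟨q, hbq, hqa⟩ := exists_rat_btwn hab
    exact (h q).not_gt (mul_neg_of_pos_of_neg (by linarith) (by linarith))

section
variable {X : Type*} [MeasurableSpace X] {ν : Measure X}

lemma measure_lt_eq_iSup_measure_add_inv_lt (g : X → ℝ) (u : ℝ) :
    ν {p | u < g p} = ⨆ n : ℕ, ν {p | u + ((n : ℝ) + 1)⁻¹ < g p} := by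
  have hmono : Monotone fun n : ℕ => {p | u + ((n : ℝ) + 1)⁻¹ < g p} := by
    intro m n hmn p hp
    have : ((n : ℝ) + 1)⁻¹ ≤ ((m : ℝ) + 1)⁻¹ := by gcongr
    exact lt_of_le_of_lt (by linarith) (show u + ((m : ℝ) + 1)⁻¹ < g p from hp)
  rw [← hmono.measure_iUnion]
  congr 1
  ext p
  simp only [mem_ofPred_eq, mem_iUnion]
  constructor
  · intro hp
    obtain ⟨n, hn⟩ := exists_nat_one_div_lt (sub_pos.2 hp)
    exact ⟨n, by rw [one_div] at hn; linarith⟩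
  · rintro ⟨n, hn⟩
    exact lt_of_le_of_lt (le_add_of_nonneg_right (by positivity)) hn

lemma MeasureTheory.Integrable.exists_measure_lt_abs_le {f : X → ℝ} (hf : Integrable f ν) {t : ℝ}
    (ht : 0 < t) : ∃ s : ℝ, 0 ≤ s ∧ ν {p | s < |f p|} ≤ ENNReal.ofReal t := by
  have hlim : Tendsto (fun n : ℕ => ν {p | (n : ℝ) < |f p|}) atTop (𝓝 0) := by
    have h := tendsto_measure_iInter_atTop (μ := ν) (s := fun n : ℕ => {p | (n : ℝ) < |f p|})
      (fun n => nullMeasurableSet_lt aemeasurable_const hf.aemeasurable.abs)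
      (fun m n hmn p (hp : (n : ℝ) < |f p|) => lt_of_le_of_lt (Nat.cast_le.2 hmn) hp)
      ⟨1, by simpa using (hf.measure_norm_gt_lt_top one_pos).ne⟩
    have hempty : (⋂ n : ℕ, {p | (n : ℝ) < |f p|}) = ∅ :=
      eq_empty_of_forall_notMem fun p hp =>
        (exists_nat_ge |f p|).elim fun n hn => (mem_iInter.1 hp n).not_ge hn
    rwa [hempty, measure_empty] at h
  obtain ⟨n, hn⟩ := (hlim.eventually (gt_mem_nhds (ENNReal.ofReal_pos.2 ht))).exists
  exact ⟨n, n.cast_nonneg, hn.le⟩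

-- Integrability makes the set defining `rearrM ν f t` nonempty; otherwise `sInf ∅ = 0`.
lemma rearrM_le_iff {f : X → ℝ} (hf : Integrable f ν) {t u : ℝ} (ht : 0 < t) (hu : 0 ≤ u) :
    rearrM ν f t ≤ u ↔ ν {p | u < |f p|} ≤ ENNReal.ofReal t := by
  have hbdd : BddBelow {s : ℝ | 0 ≤ s ∧ ν {p | s < |f p|} ≤ ENNReal.ofReal t} :=
    ⟨0, fun s hs => hs.1⟩
  refine ⟨fun h => ?_, fun h => csInf_le hbdd ⟨hu, h⟩⟩
  rw [measure_lt_eq_iSup_measure_add_inv_lt]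
  refine iSup_le fun n => ?_
  obtain ⟨s, ⟨-, hs⟩, hslt⟩ := exists_lt_of_csInf_lt (hf.exists_measure_lt_abs_le ht)
    (lt_of_le_of_lt h (lt_add_of_pos_right u (by positivity : (0 : ℝ) < ((n : ℝ) + 1)⁻¹)))
  exact (measure_mono fun p (hp : _ < |f p|) => hslt.trans hp).trans hs

lemma measure_lt_abs_eq_of_rearrM_eq {f g : X → ℝ} (hf : Integrable f ν) (hg : Integrable g ν)
    (h : rearrM ν f = rearrM ν g) {u : ℝ} (hu : 0 < u) :
    ν {p | u < |f p|} = ν {p | u < |g p|} := by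
  have key : ∀ f g : X → ℝ, Integrable f ν → Integrable g ν → rearrM ν f = rearrM ν g →
      ν {p | u < |f p|} ≤ ν {p | u < |g p|} := by
    intro f g hf hg h
    refine ENNReal.le_of_forall_le_ofReal_imp
      (by simpa using (hg.measure_norm_gt_lt_top hu).ne) fun t ht hgt => ?_
    rwa [← rearrM_le_iff hf ht hu.le, h, rearrM_le_iff hg ht hu.le]
  exact (key f g hf hg h).antisymm (key g f hg hf h.symm)

lemma measure_lt_eq_of_rearrM_posPart_eq {f g : X → ℝ} (hf : Integrable f ν)
    (hg : Integrable g ν)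
    (h : rearrM ν (fun p => max (f p) 0) = rearrM ν (fun p => max (g p) 0)) {u : ℝ}
    (hu : 0 < u) : ν {p | u < f p} = ν {p | u < g p} := by
  have hset : ∀ φ : X → ℝ, {p | u < |max (φ p) 0|} = {p | u < φ p} := fun φ => by
    ext p
    simp [abs_of_nonneg, hu.not_gt]
  simpa only [hset] using measure_lt_abs_eq_of_rearrM_eq hf.pos_part hg.pos_part h hu

lemma lintegral_ofReal_sub_eq_lintegral_measure_lt {f : X → ℝ} (hf : AEMeasurable f ν)
    (c : ℝ) : ∫⁻ p, ENNReal.ofReal (f p - c) ∂ν = ∫⁻ t in Ioi 0, ν {p | c + t < f p} := by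
  have hmax : ∀ p, ENNReal.ofReal (f p - c) = ENNReal.ofReal (max (f p - c) 0) := by
    simp
  simp_rw [hmax]
  rw [lintegral_eq_lintegral_meas_lt (f := fun p => max (f p - c) 0) ν
    (ae_of_all _ fun p => le_max_right _ _) ((hf.sub_const c).max aemeasurable_const)]
  refine setLIntegral_congr_fun measurableSet_Ioi fun t (ht : 0 < t) => ?_
  congr 1
  ext p
  simp only [mem_ofPred_eq, lt_max_iff, ht.not_gt, or_false]
  constructor <;> intro <;> linarith

lemma lintegral_ofReal_sub_eq_of_measure_lt_eq {f g : X → ℝ} (hf : AEMeasurable f ν)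
    (hg : AEMeasurable g ν) (h : ∀ u : ℝ, 0 < u → ν {p | u < f p} = ν {p | u < g p}) {c : ℝ}
    (hc : 0 ≤ c) : ∫⁻ p, ENNReal.ofReal (f p - c) ∂ν = ∫⁻ p, ENNReal.ofReal (g p - c) ∂ν := by
  rw [lintegral_ofReal_sub_eq_lintegral_measure_lt hf,
    lintegral_ofReal_sub_eq_lintegral_measure_lt hg]
  exact setLIntegral_congr_fun measurableSet_Ioi fun t (ht : 0 < t) => h _ (by linarith)

lemma ae_mul_nonneg_of_lintegral_ofReal_add_eq {f g : X → ℝ} (hf : AEMeasurable f ν)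
    (hg : AEMeasurable g ν)
    (hfin : ∫⁻ p, ENNReal.ofReal (f p) ∂ν + ∫⁻ p, ENNReal.ofReal (g p) ∂ν ≠ ∞)
    (h : ∫⁻ p, ENNReal.ofReal (f p + g p) ∂ν
      = ∫⁻ p, ENNReal.ofReal (f p) ∂ν + ∫⁻ p, ENNReal.ofReal (g p) ∂ν) :
    ∀ᵐ p ∂ν, 0 ≤ f p * g p := by
  have hae : (fun p => ENNReal.ofReal (f p + g p)) =ᵐ[ν]
      fun p => ENNReal.ofReal (f p) + ENNReal.ofReal (g p) :=
    ae_eq_of_ae_le_of_lintegral_le (ae_of_all _ fun _ => ENNReal.ofReal_add_le) (h ▸ hfin)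
      (hf.ennreal_ofReal.add hg.ennreal_ofReal)
      (by rw [lintegral_add_left' hf.ennreal_ofReal, h])
  filter_upwards [hae] with p hp
  by_contra hneg
  exact (ENNReal.ofReal_add_lt_of_mul_neg (not_le.1 hneg)).ne hp

lemma ae_mul_sub_nonneg_of_measure_lt_eq {x x₁ x₂ : X → ℝ} (hx : Integrable x ν)
    (hx₁ : AEMeasurable x₁ ν) (hx₂ : AEMeasurable x₂ ν)
    (hmid : x =ᵐ[ν] fun p => (x₁ p + x₂ p) / 2)
    (h₁ : ∀ u : ℝ, 0 < u → ν {p | u < x₁ p} = ν {p | u < x p})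
    (h₂ : ∀ u : ℝ, 0 < u → ν {p | u < x₂ p} = ν {p | u < x p}) {c : ℝ} (hc : 0 ≤ c) :
    ∀ᵐ p ∂ν, 0 ≤ (x₁ p - c) * (x₂ p - c) := by
  set I := ∫⁻ p, ENNReal.ofReal (x p - c) ∂ν
  have hI₁ := lintegral_ofReal_sub_eq_of_measure_lt_eq hx₁ hx.aemeasurable h₁ hc
  have hI₂ := lintegral_ofReal_sub_eq_of_measure_lt_eq hx₂ hx.aemeasurable h₂ hc
  have hI : I ≠ ∞ := ne_top_of_le_ne_top hx.lintegral_lt_top.ne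
    (lintegral_mono fun p => ENNReal.ofReal_le_ofReal (by linarith))
  have hsum : ∫⁻ p, ENNReal.ofReal (x₁ p - c + (x₂ p - c)) ∂ν = I + I := by
    calc ∫⁻ p, ENNReal.ofReal (x₁ p - c + (x₂ p - c)) ∂ν
        = ∫⁻ p, 2 * ENNReal.ofReal (x p - c) ∂ν := by
          refine lintegral_congr_ae ?_
          filter_upwards [hmid] with p hp
          rw [hp, ← ENNReal.ofReal_ofNat 2, ← ENNReal.ofReal_mul zero_le_two]
          ring_nf
      _ = I + I := by rw [lintegral_const_mul' _ _ ENNReal.ofNat_ne_top, two_mul]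
  refine ae_mul_nonneg_of_lintegral_ofReal_add_eq (hx₁.sub_const c) (hx₂.sub_const c)
    ?_ ?_
  · rw [hI₁, hI₂]; exact ENNReal.add_ne_top.2 ⟨hI, hI⟩
  · rw [hI₁, hI₂, hsum]

end

theorem stmt16_general {X : Type*} [MeasurableSpace X] (ν : Measure X)
    (x x₁ x₂ : X → ℝ) (hx : Integrable x ν) (hx₁ : Integrable x₁ ν)
    (hx₂ : Integrable x₂ ν)
    (hmid : x =ᵐ[ν] fun ω => (x₁ ω + x₂ ω) / 2)
    (hpos : ∀ t : ℝ,
      rearrM ν (fun ω => max (x₁ ω) 0) t = rearrM ν (fun ω => max (x ω) 0) t ∧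
      rearrM ν (fun ω => max (x₂ ω) 0) t = rearrM ν (fun ω => max (x ω) 0) t)
    (hneg : ∀ t : ℝ,
      rearrM ν (fun ω => max (-x₁ ω) 0) t = rearrM ν (fun ω => max (-x ω) 0) t ∧
      rearrM ν (fun ω => max (-x₂ ω) 0) t = rearrM ν (fun ω => max (-x ω) 0) t) :
    x₁ =ᵐ[ν] x ∧ x₂ =ᵐ[ν] x := by
  have hlevel : ∀ c : ℝ, ∀ᵐ ω ∂ν, 0 ≤ (x₁ ω - c) * (x₂ ω - c) := by
    intro c
    rcases le_total 0 c with hc | hc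
    · exact ae_mul_sub_nonneg_of_measure_lt_eq hx hx₁.aemeasurable hx₂.aemeasurable hmid
        (fun u => measure_lt_eq_of_rearrM_posPart_eq hx₁ hx (funext fun t => (hpos t).1))
        (fun u => measure_lt_eq_of_rearrM_posPart_eq hx₂ hx (funext fun t => (hpos t).2))
        hc
    · have hmid' : -x =ᵐ[ν] fun ω => (-x₁ ω + -x₂ ω) / 2 :=
        hmid.mono fun ω hω => by simp only [Pi.neg_apply, hω]; ring
      filter_upwards [ae_mul_sub_nonneg_of_measure_lt_eq hx.neg hx₁.aemeasurable.neg
        hx₂.aemeasurable.neg hmid'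
        (fun u => measure_lt_eq_of_rearrM_posPart_eq hx₁.neg hx.neg (funext fun t => (hneg t).1))
        (fun u => measure_lt_eq_of_rearrM_posPart_eq hx₂.neg hx.neg (funext fun t => (hneg t).2))
        (neg_nonneg.2 hc)] with ω hω
      simp only [Pi.neg_apply] at hω
      linarith
  have h₁₂ : x₁ =ᵐ[ν] x₂ := by
    filter_upwards [ae_all_iff.2 fun q : ℚ => hlevel q] with ω hω
    exact Real.eq_of_forall_rat_mul_sub_nonneg hω
  have h₁ : x₁ =ᵐ[ν] x := by
    filter_upwards [h₁₂, hmid] with ω h hm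
    rw [hm, h]; ring
  exact ⟨h₁, h₁₂.symm.trans h₁⟩

/-- If `x = (x₁ + x₂)/2` and the rearrangements of positive and negative parts of
`x₁, x₂` all coincide with those of `x`, then `x = x₁ = x₂` a.e. -/
theorem stmt16 {X : Type*} [MeasurableSpace X] (ν : Measure X) [SigmaFinite ν]
    (x x₁ x₂ : X → ℝ) (hx : Integrable x ν) (hx₁ : Integrable x₁ ν)
    (hx₂ : Integrable x₂ ν)
    (hmid : x =ᵐ[ν] fun ω => (x₁ ω + x₂ ω) / 2)
    (hpos : ∀ t : ℝ,
      rearrM ν (fun ω => max (x₁ ω) 0) t = rearrM ν (fun ω => max (x ω) 0) t ∧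
      rearrM ν (fun ω => max (x₂ ω) 0) t = rearrM ν (fun ω => max (x ω) 0) t)
    (hneg : ∀ t : ℝ,
      rearrM ν (fun ω => max (-x₁ ω) 0) t = rearrM ν (fun ω => max (-x ω) 0) t ∧
      rearrM ν (fun ω => max (-x₂ ω) 0) t = rearrM ν (fun ω => max (-x ω) 0) t) :
    x₁ =ᵐ[ν] x ∧ x₂ =ᵐ[ν] x :=
  stmt16_general ν x x₁ x₂ hx hx₁ hx₂ hmid hpos hneg
end
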